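/- (Local injectivity.) Let X, Y be Fréchet spaces, U ⊆ X open and convex, and f : U → Y a C¹ function (directionally differentiable with derivative f'(x)(h) jointly continuous, hence linear in h). Suppose there exist constants cₙ > 0 with ‖h‖ₙ ≤ cₙ‖f'(x)(h)‖ₙ for all n ≥ 0, x ∈ U, h ∈ X, and constants cₙ' > 0 and an index r ≥ 0 with ‖f'(x)(h) − f'(z)(h)‖ₙ ≤ cₙ'[‖x−z‖_r ‖h‖ₙ + ‖x−z‖ₙ ‖h‖_r] for all n ≥ 0, x, z ∈ U, h ∈ X. Then f is locally injective on U: every point of U has a neighbourhood on which f is injective. -/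

import Mathlib

/-
Fix `x₀ ∈ U` and `x, z ∈ U` close to `x₀` with `f x = f z`, and put `h = x - z`. Testing against
Hahn–Banach functionals dominated by `‖·‖ₙ` reduces the mean value inequality along the segment
`[z, x]` to the real one, and the Lipschitz bound on `f'` turns it into
`‖f'(z) h‖ₙ = ‖f x - f z - f'(z) h‖ₙ ≤ 2 c'ₙ ‖h‖_r ‖h‖ₙ`. With the lower bound on `f'` this gives
`‖h‖ₙ ≤ 2 cₙ c'ₙ ‖h‖_r ‖h‖ₙ`. On the neighbourhood where `‖h‖_r < 1 / (2 c_r c'_r)` the case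
`n = r` forces `‖h‖_r = 0`, and then every `‖h‖ₙ` vanishes, so `x = z`.
-/

open Filter Topology Set

noncomputable section

/-- Directional derivative: `f'(x,h) = lim_{t↓0} (f(x+th) - f(x))/t`. -/
def HasDirDeriv {X Y : Type*} [AddCommGroup X] [Module ℝ X]
    [AddCommGroup Y] [Module ℝ Y] [TopologicalSpace Y]
    (f : X → Y) (x h : X) (v : Y) : Prop :=
  Filter.Tendsto (fun t : ℝ => t⁻¹ • (f (x + t • h) - f x)) (𝓝[>] (0:ℝ)) (𝓝 v)

def IsFrechetMetric {X : Type*} [AddCommGroup X] [Module ℝ X] [Dist X]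
    (p : ℕ → Seminorm ℝ X) : Prop :=
  ∀ x y : X, dist x y = ⨆ n : ℕ, (2:ℝ)⁻¹ ^ n * p n (x - y) / (1 + p n (x - y))

lemma mul_div_one_add_le_left {w a : ℝ} (hw : 0 ≤ w) (ha : 0 ≤ a) : w * a / (1 + a) ≤ w := by
  rw [mul_div_assoc]
  exact mul_le_of_le_one_right hw ((div_le_one (by positivity)).2 (by linarith))

namespace IsFrechetMetric

variable {X : Type*} [AddCommGroup X] [Module ℝ X] [MetricSpace X] {p : ℕ → Seminorm ℝ X}

lemma weighted_le_dist (hp : IsFrechetMetric p) (n : ℕ) (x y : X) :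
    (2:ℝ)⁻¹ ^ n * p n (x - y) / (1 + p n (x - y)) ≤ dist x y := by
  rw [hp]
  refine le_ciSup (f := fun m => (2:ℝ)⁻¹ ^ m * p m (x - y) / (1 + p m (x - y))) ⟨1, ?_⟩ n
  rintro _ ⟨m, rfl⟩
  exact (mul_div_one_add_le_left (by positivity) (apply_nonneg _ _)).trans (pow_le_one₀ (by norm_num) (by norm_num))

lemma seminorm_lt_of_dist_lt (hp : IsFrechetMetric p) (n : ℕ) {x y : X} {ε : ℝ} (hε : 0 < ε)
    (hd : dist x y < (2:ℝ)⁻¹ ^ n * ε / (1 + ε)) : p n (x - y) < ε := by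
  by_contra! hle
  have hmono : ε / (1 + ε) ≤ p n (x - y) / (1 + p n (x - y)) := by
    rw [div_le_div_iff₀ (by positivity) (by positivity)]
    nlinarith
  have := weighted_le_dist hp n x y
  simp only [mul_div_assoc] at hd this
  nlinarith [mul_le_mul_of_nonneg_left hmono (by positivity : (0:ℝ) ≤ (2:ℝ)⁻¹ ^ n)]

lemma dist_le_of_seminorm_le (hp : IsFrechetMetric p) {x y : X} {N : ℕ} {ε : ℝ}
    (hN : (2:ℝ)⁻¹ ^ N ≤ ε) (h : ∀ n < N, p n (x - y) ≤ ε) : dist x y ≤ ε := by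
  rw [hp]
  refine ciSup_le fun n => ?_
  have ha := apply_nonneg (p n) (x - y)
  rcases lt_or_ge n N with hn | hn
  · calc (2:ℝ)⁻¹ ^ n * p n (x - y) / (1 + p n (x - y)) ≤ p n (x - y) := by
          rw [div_le_iff₀ (by positivity)]
          nlinarith [pow_le_one₀ (n := n) (by norm_num : (0:ℝ) ≤ 2⁻¹) (by norm_num),
            pow_nonneg (by norm_num : (0:ℝ) ≤ 2⁻¹) n]
      _ ≤ ε := h n hn
  · exact (mul_div_one_add_le_left (by positivity) ha).trans
      ((pow_le_pow_of_le_one (by norm_num) (by norm_num) hn).trans hN)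

theorem tendsto_iff (hp : IsFrechetMetric p) {ι : Type*} {l : Filter ι} {u : ι → X} {y : X} :
    Tendsto u l (𝓝 y) ↔ ∀ n, Tendsto (fun i => p n (u i - y)) l (𝓝 0) := by
  constructor
  · intro hu n
    rw [Metric.tendsto_nhds] at hu ⊢
    intro ε hε
    filter_upwards [hu _ (by positivity : 0 < (2:ℝ)⁻¹ ^ n * ε / (1 + ε))] with i hi
    rw [Real.dist_eq, sub_zero, abs_of_nonneg (apply_nonneg _ _)]
    exact seminorm_lt_of_dist_lt hp n hε hi
  · intro hu
    rw [Metric.tendsto_nhds]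
    intro ε hε
    obtain ⟨N, hN⟩ := exists_pow_lt_of_lt_one (half_pos hε) (by norm_num : (2:ℝ)⁻¹ < 1)
    have hsmall : ∀ n, ∀ᶠ i in l, p n (u i - y) ≤ ε / 2 := fun n =>
      (hu n).eventually (ge_mem_nhds (half_pos hε))
    filter_upwards [(Finset.range N).eventually_all.2 fun n _ => hsmall n] with i hi
    exact (dist_le_of_seminorm_le hp hN.le fun n hn => hi n (Finset.mem_range.2 hn)).trans_lt
      (half_lt_self hε)

lemma continuous_seminorm_sub (hp : IsFrechetMetric p) (n : ℕ) (x₀ : X) :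
    Continuous fun x => p n (x - x₀) := by
  refine continuous_iff_continuousAt.2 fun x => ?_
  refine tendsto_iff_norm_sub_tendsto_zero.2 (squeeze_zero (fun _ => norm_nonneg _) (fun x' => ?_)
    ((hp.tendsto_iff.1 tendsto_id) n))
  rw [Real.norm_eq_abs, id, show x' - x = (x' - x₀) - (x - x₀) by abel]
  exact abs_sub_map_le_sub _ _ _

lemma continuous_of_abs_le_seminorm (hp : IsFrechetMetric p) {n : ℕ} (g : X →ₗ[ℝ] ℝ)
    (hg : ∀ w, |g w| ≤ p n w) : Continuous g := by
  refine continuous_iff_continuousAt.2 fun x => ?_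
  refine tendsto_iff_norm_sub_tendsto_zero.2 (squeeze_zero (fun _ => norm_nonneg _) (fun x' => ?_)
    ((hp.tendsto_iff.1 tendsto_id) n))
  rw [Real.norm_eq_abs, ← map_sub]
  exact hg _

lemma continuous_add_smul (hp : IsFrechetMetric p) (u h : X) :
    Continuous fun t : ℝ => u + t • h := by
  refine continuous_iff_continuousAt.2 fun t => hp.tendsto_iff.2 fun n => ?_
  have hline : ∀ s : ℝ, p n (u + s • h - (u + t • h)) = |s - t| * p n h := fun s => by
    rw [← Real.norm_eq_abs, ← map_smul_eq_mul, sub_smul, add_sub_add_left_eq_sub]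
  simp only [hline]
  have hcont : Continuous fun s : ℝ => |s - t| * p n h := by fun_prop
  simpa using hcont.tendsto t

lemma eq_of_forall_seminorm_eq_zero (hp : IsFrechetMetric p) {x y : X}
    (h : ∀ n, p n (x - y) = 0) : x = y := by
  refine eq_of_dist_eq_zero (le_antisymm ?_ dist_nonneg)
  rw [hp]
  simp [h]

end IsFrechetMetric

theorem Seminorm.exists_dual_vector {E : Type*} [AddCommGroup E] [Module ℝ E]
    (q : Seminorm ℝ E) (y : E) : ∃ g : Module.Dual ℝ E, g y = q y ∧ ∀ w, |g w| ≤ q w := by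
  rcases eq_or_ne (q y) 0 with hy | hy
  · exact ⟨0, by simp [hy], fun w => by simp⟩
  have hy0 : y ≠ 0 := fun h => hy (by simp [h])
  let f := LinearPMap.mkSpanSingleton (K := ℝ) (L := ℝ) (σ := RingHom.id ℝ) y (q y) hy0
  obtain ⟨g, hgf, hgq⟩ := Module.Dual.exists_extension_of_le_seminorm_real f.domain f.toFun
    (p := q) <| by
      rintro ⟨w, hw⟩
      obtain ⟨c, rfl⟩ := Submodule.mem_span_singleton.1 hw
      rw [LinearPMap.toFun_eq_coe, LinearPMap.mkSpanSingleton'_apply, smul_eq_mul,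
        map_smul_eq_mul, Real.norm_eq_abs]
      exact mul_le_mul_of_nonneg_right (le_abs_self c) (apply_nonneg q y)
  refine ⟨g, ?_, hgq⟩
  rw [hgf ⟨y, Submodule.mem_span_singleton_self y⟩, LinearPMap.toFun_eq_coe]
  exact LinearPMap.mkSpanSingleton_apply ℝ ℝ hy0 (q y)

namespace HasDirDeriv

variable {X Y : Type*} [AddCommGroup X] [Module ℝ X] [AddCommGroup Y] [Module ℝ Y]
  [TopologicalSpace Y]

lemma comp_linearMap {Z : Type*} [AddCommGroup Z] [Module ℝ Z] [TopologicalSpace Z]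
    {f : X → Y} {x h : X} {v : Y} (hf : HasDirDeriv f x h v) (g : Y →ₗ[ℝ] Z)
    (hg : Continuous g) : HasDirDeriv (g ∘ f) x h (g v) := by
  unfold HasDirDeriv at hf ⊢
  convert (hg.tendsto v).comp hf using 2 with t
  simp only [Function.comp_apply, map_smul, map_sub]

lemma along_line {f : X → Y} {z h : X} {s : ℝ} {v : Y} (hf : HasDirDeriv f (z + s • h) h v) :
    HasDirDeriv (fun t : ℝ => f (z + t • h)) s 1 v := by
  unfold HasDirDeriv at hf ⊢
  simpa only [smul_eq_mul, mul_one, add_smul, add_assoc] using hf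

lemma hasDerivWithinAt_Ici {F : Type*} [NormedAddCommGroup F] [NormedSpace ℝ F] {γ : ℝ → F}
    {s : ℝ} {v : F} (hγ : HasDirDeriv γ s 1 v) : HasDerivWithinAt γ v (Ici s) s := by
  refine HasDerivWithinAt.Ici_of_Ioi ((hasDerivWithinAt_iff_tendsto_slope' self_notMem_Ioi).2 ?_)
  have hshift : Tendsto (fun y : ℝ => y - s) (𝓝[>] s) (𝓝[>] 0) := by
    refine tendsto_nhdsWithin_of_tendsto_nhds_of_eventually_within _ ?_ ?_
    · simpa using ((continuous_sub_right s).tendsto s).mono_left nhdsWithin_le_nhds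
    · filter_upwards [self_mem_nhdsWithin] with y hy using sub_pos.2 (mem_Ioi.1 hy)
  convert hγ.comp hshift using 1
  ext y
  simp [slope_def_module]

end HasDirDeriv

theorem norm_sub_sub_le_of_hasDerivWithinAt_Ici {E : Type*} [NormedAddCommGroup E]
    [NormedSpace ℝ E] {ψ D : ℝ → E} {v : E} {C : ℝ} (hψ : ContinuousOn ψ (Icc 0 1))
    (hD : ∀ s ∈ Ico (0:ℝ) 1, HasDerivWithinAt ψ (D s) (Ici s) s)
    (hC : ∀ s ∈ Ico (0:ℝ) 1, ‖D s - v‖ ≤ C) : ‖ψ 1 - ψ 0 - v‖ ≤ C := by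
  have hmvt := norm_image_sub_le_of_norm_deriv_right_le_segment
    (f := fun t => ψ t - t • v) (hψ.sub (by fun_prop)) (fun s hs => (hD s hs).sub
      ((hasDerivWithinAt_id s _).smul_const v |>.congr_deriv (one_smul ℝ v))) hC 1
    (right_mem_Icc.2 zero_le_one)
  simpa [sub_right_comm] using hmvt

lemma IsFrechetMetric.seminorm_sub_sub_le_of_hasDirDeriv {Y : Type*} [AddCommGroup Y]
    [Module ℝ Y] [MetricSpace Y] {q : ℕ → Seminorm ℝ Y} (hq : IsFrechetMetric q) {n : ℕ}
    {γ D : ℝ → Y} {v : Y} {C : ℝ} (hγ : ContinuousOn γ (Icc 0 1))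
    (hD : ∀ s ∈ Ico (0:ℝ) 1, HasDirDeriv γ s 1 (D s))
    (hC : ∀ s ∈ Ico (0:ℝ) 1, q n (D s - v) ≤ C) : q n (γ 1 - γ 0 - v) ≤ C := by
  obtain ⟨g, hgy, hgq⟩ := (q n).exists_dual_vector (γ 1 - γ 0 - v)
  have hg : Continuous g := hq.continuous_of_abs_le_seminorm g hgq
  have key := norm_sub_sub_le_of_hasDerivWithinAt_Ici (ψ := g ∘ γ) (D := g ∘ D) (v := g v)
    (hg.comp_continuousOn hγ) (fun s hs => ((hD s hs).comp_linearMap g hg).hasDerivWithinAt_Ici)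
    (fun s hs => by simpa only [Function.comp_apply, Real.norm_eq_abs, ← map_sub]
      using (hgq _).trans (hC s hs))
  simpa only [Function.comp_apply, ← map_sub, hgy, Real.norm_eq_abs,
    abs_of_nonneg (apply_nonneg _ _)] using key

lemma IsFrechetMetric.seminorm_sub_sub_le_of_deriv_sub_le {X Y : Type*} [AddCommGroup X]
    [Module ℝ X] [MetricSpace X] [AddCommGroup Y] [Module ℝ Y] [MetricSpace Y]
    {p : ℕ → Seminorm ℝ X} {q : ℕ → Seminorm ℝ Y} (hp : IsFrechetMetric p)
    (hq : IsFrechetMetric q) {U : Set X} (hconv : Convex ℝ U) {f : X → Y} (hf : ContinuousOn f U)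
    {f' : X → X →ₗ[ℝ] Y} (hderiv : ∀ x ∈ U, ∀ h : X, HasDirDeriv f x h (f' x h))
    {n r : ℕ} {c' : ℝ} (hc' : 0 ≤ c')
    (hf' : ∀ x ∈ U, ∀ z ∈ U, ∀ h : X,
      q n (f' x h - f' z h) ≤ c' * (p r (x - z) * p n h + p n (x - z) * p r h))
    {x z : X} (hx : x ∈ U) (hz : z ∈ U) :
    q n (f x - f z - f' z (x - z)) ≤ 2 * c' * p r (x - z) * p n (x - z) := by
  set h := x - z
  have hseg : ∀ s ∈ Icc (0:ℝ) 1, z + s • h ∈ U := fun s hs => hconv.add_smul_sub_mem hz hx hs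
  have hbound : ∀ s ∈ Ico (0:ℝ) 1,
      q n (f' (z + s • h) h - f' z h) ≤ 2 * c' * p r h * p n h := fun s hs => by
    have hs₀ := hs.1
    have hs₁ := hs.2.le
    have hpr := apply_nonneg (p r) h
    have hpn := apply_nonneg (p n) h
    calc q n (f' (z + s • h) h - f' z h)
        ≤ c' * (p r (s • h) * p n h + p n (s • h) * p r h) := by
          simpa only [add_sub_cancel_left] using hf' _ (hseg s (Ico_subset_Icc_self hs)) z hz h
      _ = s * (2 * c' * p r h * p n h) := by
          simp only [map_smul_eq_mul, Real.norm_eq_abs, abs_of_nonneg hs₀]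
          ring
      _ ≤ 2 * c' * p r h * p n h := mul_le_of_le_one_left (by positivity) hs₁
  have key := hq.seminorm_sub_sub_le_of_hasDirDeriv (γ := fun t => f (z + t • h))
    (hf.comp (hp.continuous_add_smul z h).continuousOn hseg)
    (fun s hs => (hderiv _ (hseg s (Ico_subset_Icc_self hs)) h).along_line) hbound
  simpa [h] using key

lemma forall_eq_zero_of_le_mul {a K : ℕ → ℝ} {r : ℕ} (ha : ∀ n, 0 ≤ a n)
    (h : ∀ n, a n ≤ K n * a r * a n) (hr : K r * a r < 1) : ∀ n, a n = 0 := by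
  have har : a r = 0 := by nlinarith [h r, ha r]
  intro n
  have := h n
  rw [har, mul_zero, zero_mul] at this
  exact le_antisymm this (ha n)

theorem stmt13_general {X Y : Type*}
    [AddCommGroup X] [Module ℝ X] [MetricSpace X]
    [AddCommGroup Y] [Module ℝ Y] [MetricSpace Y]
    (p : ℕ → Seminorm ℝ X) (q : ℕ → Seminorm ℝ Y)
    (hdistX : ∀ x y : X,
      dist x y = ⨆ n : ℕ, (2:ℝ)⁻¹ ^ n * p n (x - y) / (1 + p n (x - y)))
    (hdistY : ∀ u v : Y,
      dist u v = ⨆ n : ℕ, (2:ℝ)⁻¹ ^ n * q n (u - v) / (1 + q n (u - v)))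
    (U : Set X) (hconv : Convex ℝ U)
    (f : X → Y) (hf : ContinuousOn f U)
    -- f ∈ C¹(U): the derivative f'(x) is linear in the direction and jointly continuous
    (f' : X → X →ₗ[ℝ] Y)
    (hderiv : ∀ x ∈ U, ∀ h : X, HasDirDeriv f x h (f' x h))
    (c : ℕ → ℝ) (hc : ∀ n, 0 < c n)
    (heqq1 : ∀ n : ℕ, ∀ x ∈ U, ∀ h : X, p n h ≤ c n * q n (f' x h))
    (c' : ℕ → ℝ) (hc' : ∀ n, 0 < c' n) (r : ℕ)
    (heqq2 : ∀ n : ℕ, ∀ x ∈ U, ∀ z ∈ U, ∀ h : X,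
      q n (f' x h - f' z h) ≤ c' n * (p r (x - z) * p n h + p n (x - z) * p r h)) :
    ∀ x ∈ U, ∃ W : Set X, IsOpen W ∧ x ∈ W ∧ Set.InjOn f (U ∩ W) := by
  intro x₀ _
  have hcr : 0 < 2 * c r * c' r := by have := hc r; have := hc' r; positivity
  set ε := 1 / (2 * c r * c' r)
  have hε : 0 < ε := by positivity
  refine ⟨{x | p r (x - x₀) < ε / 2},
    isOpen_lt (IsFrechetMetric.continuous_seminorm_sub hdistX r x₀) continuous_const,
    by simpa using hε, ?_⟩
  rintro x ⟨hxU, hxW⟩ z ⟨hzU, hzW⟩ hfxz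
  have hsmall : p r (x - z) < ε := calc
    p r (x - z) = p r ((x - x₀) - (z - x₀)) := by rw [sub_sub_sub_cancel_right]
    _ ≤ p r (x - x₀) + p r (z - x₀) := map_sub_le_add _ _ _
    _ < ε := by linarith [show p r (x - x₀) < ε / 2 from hxW, show p r (z - x₀) < ε / 2 from hzW]
  have hchain : ∀ n, p n (x - z) ≤ 2 * c n * c' n * p r (x - z) * p n (x - z) := fun n => calc
    p n (x - z) ≤ c n * q n (f' z (x - z)) := heqq1 n z hzU _
    _ = c n * q n (f x - f z - f' z (x - z)) := by rw [hfxz, sub_self, zero_sub, map_neg_eq_map]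
    _ ≤ c n * (2 * c' n * p r (x - z) * p n (x - z)) :=
      mul_le_mul_of_nonneg_left (IsFrechetMetric.seminorm_sub_sub_le_of_deriv_sub_le hdistX hdistY
        hconv hf hderiv (hc' n).le (heqq2 n) hxU hzU) (hc n).le
    _ = 2 * c n * c' n * p r (x - z) * p n (x - z) := by ring
  exact IsFrechetMetric.eq_of_forall_seminorm_eq_zero hdistX <|
    forall_eq_zero_of_le_mul (fun n => apply_nonneg _ _) hchain ((lt_div_iff₀' hcr).1 hsmall)

theorem stmt13 {X Y : Type*}
    [AddCommGroup X] [Module ℝ X] [MetricSpace X] [CompleteSpace X]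
    [AddCommGroup Y] [Module ℝ Y] [MetricSpace Y] [CompleteSpace Y]
    (p : ℕ → Seminorm ℝ X) (q : ℕ → Seminorm ℝ Y)
    (hdistX : ∀ x y : X,
      dist x y = ⨆ n : ℕ, (2:ℝ)⁻¹ ^ n * p n (x - y) / (1 + p n (x - y)))
    (hdistY : ∀ u v : Y,
      dist u v = ⨆ n : ℕ, (2:ℝ)⁻¹ ^ n * q n (u - v) / (1 + q n (u - v)))
    (U : Set X) (hU : IsOpen U) (hconv : Convex ℝ U)
    (f : X → Y) (hf : ContinuousOn f U)
    -- f ∈ C¹(U): the derivative f'(x) is linear in the direction and jointly continuous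
    (f' : X → X →ₗ[ℝ] Y)
    (hderiv : ∀ x ∈ U, ∀ h : X, HasDirDeriv f x h (f' x h))
    (hjoint : ContinuousOn (fun z : X × X => f' z.1 z.2) (U ×ˢ Set.univ))
    (c : ℕ → ℝ) (hc : ∀ n, 0 < c n)
    (heqq1 : ∀ n : ℕ, ∀ x ∈ U, ∀ h : X, p n h ≤ c n * q n (f' x h))
    (c' : ℕ → ℝ) (hc' : ∀ n, 0 < c' n) (r : ℕ)
    (heqq2 : ∀ n : ℕ, ∀ x ∈ U, ∀ z ∈ U, ∀ h : X,
      q n (f' x h - f' z h) ≤ c' n * (p r (x - z) * p n h + p n (x - z) * p r h)) :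
    ∀ x ∈ U, ∃ W : Set X, IsOpen W ∧ x ∈ W ∧ Set.InjOn f (U ∩ W) :=
  stmt13_general p q hdistX hdistY U hconv f hf f' hderiv c hc heqq1 c' hc' r heqq2
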